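/- Let G₆ be the subgroup of G₇ generated by s and u. Then {1, z, z²} is a left transversal of G₆ in G₇, i.e. G₇ = G₆ ∪ z·G₆ ∪ z²·G₆ with the three cosets pairwise disjoint; consequently, with Z₇ = {1, z, …, z¹¹}, U = {1, u, u²}, and X₇ = {1, s, s·u, s·u·s}, the map Z₇ × U × X₇ → G₇ sending (y, v, x) to y·v·x is a bijection. -/

import Mathlib

/-!
Each generator commutes with `z = stu = tus = ust`, so `z` is central, and `t³ = 1` with
`t = s⁻¹ z u⁻¹` says `z³ = (us)³ ∈ G₆`. The homomorphism `G₇ → ℤ/3` with `t ↦ 1`, `s, u ↦ 0` kills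
`G₆` and sends `z ↦ 1`, so the cosets `zᵃ G₆`, `a < 3`, are pairwise disjoint.

In any group where `s² = u³ = 1` and `c = (us)³` is central, the involutions `s`, `usu⁻¹`, `u⁻¹su`
satisfy `s · usu⁻¹ = c · u⁻¹su` and `u⁻¹su · s = c · usu⁻¹`, which forces `c⁴ = 1`. Together with
`su² = c⁻¹ · usus` and `susu = c · u²s` this makes the set of words `zⁱ uʲ x` closed under right
multiplication by the generators, so these words exhaust `G₇`; as `z³ ∈ G₆`, every element lies in
some `zᵃ G₆` with `a < 3`. The words are pairwise distinct because their images under a reflection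
representation of `G₇` over `𝔽₁₃` are.
-/

open Pointwise

namespace Tetra

def rels : Set (FreeGroup (Fin 3)) :=
  { FreeGroup.of 0 ^ 2, FreeGroup.of 1 ^ 3, FreeGroup.of 2 ^ 3,
    FreeGroup.of 0 * FreeGroup.of 1 * FreeGroup.of 2 *
      (FreeGroup.of 1 * FreeGroup.of 2 * FreeGroup.of 0)⁻¹,
    FreeGroup.of 0 * FreeGroup.of 1 * FreeGroup.of 2 *
      (FreeGroup.of 2 * FreeGroup.of 0 * FreeGroup.of 1)⁻¹ }

/-- The group `G₇ = ⟨s, t, u | s² = t³ = u³ = 1, stu = tus = ust⟩`. -/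
abbrev G7 := PresentedGroup rels

def s : G7 := PresentedGroup.of 0
def t : G7 := PresentedGroup.of 1
def u : G7 := PresentedGroup.of 2
def z : G7 := s * t * u

def G6 : Subgroup G7 := Subgroup.closure {s, u}

section Group

variable {G : Type*} [Group G]

theorem pow_four_eq_one_of_mul_eq_mul {a b c d : G} (ha : a ^ 2 = 1) (hb : b ^ 2 = 1)
    (hd : d ^ 2 = 1) (hcb : Commute c b) (hab : a * b = c * d) (hda : d * a = c * b) :
    c ^ 4 = 1 := by
  have ha' : a⁻¹ = a := inv_eq_of_mul_eq_one_right (by rwa [← pow_two])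
  have hb' : b⁻¹ = b := inv_eq_of_mul_eq_one_right (by rwa [← pow_two])
  have hd' : d⁻¹ = d := inv_eq_of_mul_eq_one_right (by rwa [← pow_two])
  have hba : b * a = d * c⁻¹ := by simpa [ha', hb', hd'] using congrArg (·⁻¹) hab
  have had : a * d = b * c⁻¹ := by simpa [ha', hb', hd'] using congrArg (·⁻¹) hda
  have key : c ^ 2 * b = c⁻¹ * c⁻¹ * b :=
    calc c ^ 2 * b = c * d * a := by rw [mul_assoc, hda, pow_two, mul_assoc]
      _ = a * (b * a) := by rw [← hab, mul_assoc]
      _ = b * c⁻¹ * c⁻¹ := by rw [hba, ← mul_assoc, had]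
      _ = c⁻¹ * c⁻¹ * b := by rw [mul_assoc]; exact (hcb.inv_left.mul_left hcb.inv_left).eq.symm
  calc c ^ 4 = c ^ 2 * c ^ 2 := by group
    _ = c ^ 2 * (c⁻¹ * c⁻¹) := by rw [← mul_right_cancel key]
    _ = 1 := by group

theorem disjoint_smul_of_le_ker {M : Type*} [Monoid M] (f : G →* M) {K : Subgroup G}
    (hK : K ≤ f.ker) {a b : G} (hab : f a ≠ f b) :
    Disjoint (a • (K : Set G)) (b • (K : Set G)) := by
  have hf : ∀ c, ∀ x ∈ c • (K : Set G), f x = f c := by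
    rintro c _ ⟨k, hk, rfl⟩
    change f (c * k) = f c
    rw [map_mul, f.mem_ker.mp (hK hk), mul_one]
  exact Set.disjoint_left.mpr fun x hxa hxb => hab ((hf a x hxa).symm.trans (hf b x hxb))

def xs (s u : G) : Fin 4 → G := ![1, s, s * u, s * u * s]

def normalWord (z u s : G) (p : Fin 12 × Fin 3 × Fin 4) : G :=
  z ^ (p.1 : ℕ) * u ^ (p.2.1 : ℕ) * xs s u p.2.2

theorem map_normalWord {H : Type*} [Group H] (f : G →* H) (z u s : G)
    (p : Fin 12 × Fin 3 × Fin 4) :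
    f (normalWord z u s p) = normalWord (f z) (f u) (f s) p := by
  obtain ⟨i, j, k⟩ := p
  fin_cases k <;> simp [normalWord, xs]

theorem xs_mem_closure (s u : G) (k : Fin 4) : xs s u k ∈ Subgroup.closure {s, u} := by
  have hs : s ∈ Subgroup.closure {s, u} := Subgroup.subset_closure (by simp)
  have hu : u ∈ Subgroup.closure {s, u} := Subgroup.subset_closure (by simp)
  fin_cases k
  · exact one_mem _
  · exact hs
  · exact mul_mem hs hu
  · exact mul_mem (mul_mem hs hu) hs

theorem mul_mul_cancel_of_sq_eq_one {a : G} (h : a ^ 2 = 1) (g : G) : a * (a * g) = g := by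
  rw [← mul_assoc, ← pow_two, h, one_mul]

theorem mul_mul_mul_cancel_of_pow_three_eq_one {a : G} (h : a ^ 3 = 1) (g : G) :
    a * (a * (a * g)) = g := by
  rw [← mul_assoc, ← mul_assoc, ← pow_three', h, one_mul]

variable {s u : G}

theorem commute_mul_pow_three_left (hc : Commute ((u * s) ^ 3) s) :
    Commute ((u * s) ^ 3) u := by
  simpa using (Commute.self_pow (u * s) 3).symm.mul_right hc.inv_right

theorem mul_pow_three_swap (hc : Commute ((u * s) ^ 3) s) : (s * u) ^ 3 = (u * s) ^ 3 :=
  mul_right_cancel ((mul_pow_mul s u 3).trans hc.eq.symm)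

theorem exists_xs_mul_s (hs : s ^ 2 = 1) (k : Fin 4) : ∃ k', xs s u k * s = xs s u k' := by
  have hss : s * s = 1 := by rw [← pow_two, hs]
  fin_cases k
  · exact ⟨1, by simp [xs]⟩
  · exact ⟨0, by simp [xs, hss]⟩
  · exact ⟨3, rfl⟩
  · exact ⟨2, by simp [xs, mul_assoc, hss]⟩

variable (hs : s ^ 2 = 1) (hu : u ^ 3 = 1) (hc : Commute ((u * s) ^ 3) s)
include hs hu hc

theorem mul_pow_twelve_eq_one : (u * s) ^ 12 = 1 := by
  have hs1 := mul_mul_cancel_of_sq_eq_one hs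
  have hu1 := mul_mul_mul_cancel_of_pow_three_eq_one hu
  have hu0 : u * (u * u) = 1 := by rw [← pow_three, hu]
  have hui : u⁻¹ = u * u := inv_eq_of_mul_eq_one_right hu0
  have hcu := commute_mul_pow_three_left hc
  have conj_sq (g : G) : (g * s * g⁻¹) ^ 2 = 1 := by
    rw [conj_pow, hs, mul_one, mul_inv_cancel]
  have hab : s * (u * s * u⁻¹) = (u * s) ^ 3 * (u⁻¹ * s * u) := by
    rw [← mul_pow_three_swap hc]
    simp only [hui, pow_succ, pow_zero, one_mul, mul_assoc, hs1, hu1]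
  have hda : u⁻¹ * s * u * s = (u * s) ^ 3 * (u * s * u⁻¹) := by
    have hconj : (u * s) ^ 3 = u * (u * s) ^ 3 * u⁻¹ := by rw [← hcu.eq]; group
    rw [hconj]
    simp only [hui, pow_succ, pow_zero, one_mul, mul_assoc, hs1, hu1, hu0, mul_one]
  rw [show 12 = 3 * 4 by rfl, pow_mul]
  exact pow_four_eq_one_of_mul_eq_mul hs (conj_sq u) (by simpa using conj_sq u⁻¹)
    ((hcu.mul_right hc).mul_right hcu.inv_right) hab hda

theorem exists_xs_mul_u (k : Fin 4) :
    ∃ (i j : ℕ) (k' : Fin 4), xs s u k * u = (u * s) ^ (3 * i) * (u ^ j * xs s u k') := by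
  have hs1 := mul_mul_cancel_of_sq_eq_one hs
  have hu1 := mul_mul_mul_cancel_of_pow_three_eq_one hu
  have hs0 : s * s = 1 := by rw [← pow_two, hs]
  have hu0 : u * (u * u) = 1 := by rw [← pow_three, hu]
  fin_cases k
  · exact ⟨0, 1, 0, by simp [xs]⟩
  · exact ⟨0, 0, 2, by simp [xs]⟩
  · have h : (u * s) ^ 3 * (s * u * u) = u * (s * u * s) := by
      simp only [pow_succ, pow_zero, one_mul, mul_assoc, hs1, hu0, mul_one]
    refine ⟨3, 1, 3, ?_⟩
    calc s * u * u = (u * s) ^ 9 * ((u * s) ^ 3 * (s * u * u)) := by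
          rw [← mul_assoc, ← pow_add, mul_pow_twelve_eq_one hs hu hc, one_mul]
      _ = (u * s) ^ (3 * 3) * (u ^ 1 * (s * u * s)) := by rw [h, pow_one]
  · refine ⟨1, 2, 1, ?_⟩
    change s * u * s * u = (u * s) ^ 3 * (u ^ 2 * s)
    rw [← mul_pow_three_swap hc]
    simp only [pow_succ, pow_zero, one_mul, mul_assoc, hu1, hs0, mul_one]

end Group

theorem s_sq : s ^ 2 = 1 :=
  (map_pow (PresentedGroup.mk rels) _ 2).symm.trans (PresentedGroup.one_of_mem (by simp [rels]))

theorem t_cube : t ^ 3 = 1 :=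
  (map_pow (PresentedGroup.mk rels) _ 3).symm.trans (PresentedGroup.one_of_mem (by simp [rels]))

theorem u_cube : u ^ 3 = 1 :=
  (map_pow (PresentedGroup.mk rels) _ 3).symm.trans (PresentedGroup.one_of_mem (by simp [rels]))

theorem z_eq_tus : z = t * u * s :=
  PresentedGroup.mk_eq_mk_of_mul_inv_mem (by simp [rels])

theorem z_eq_ust : z = u * s * t :=
  PresentedGroup.mk_eq_mk_of_mul_inv_mem (by simp [rels])

theorem commute_z (g : G7) : Commute z g := by
  suffices g ∈ Subgroup.centralizer {z} from (Subgroup.mem_centralizer_singleton_iff.mp this).symm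
  refine PresentedGroup.generated_by rels _ (fun j => ?_) g
  rw [Subgroup.mem_centralizer_singleton_iff]
  fin_cases j
  · calc s * z = s * (t * u * s) := by rw [z_eq_tus]
      _ = z * s := by rw [z]; group
  · calc t * z = t * (u * s * t) := by rw [z_eq_ust]
      _ = z * t := by rw [z_eq_tus]; group
  · calc u * z = u * (s * t * u) := by rw [z]
      _ = z * u := by rw [z_eq_ust]; group

theorem z_pow_three : z ^ 3 = (u * s) ^ 3 := by
  have ht : t = z * (s⁻¹ * u⁻¹) := by
    rw [← mul_assoc, (commute_z s⁻¹).eq, z]; group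
  have h : z ^ 3 * (s⁻¹ * u⁻¹) ^ 3 = 1 := by
    rw [← (commute_z _).mul_pow, ← ht, t_cube]
  rw [eq_inv_of_mul_eq_one_left h, ← inv_pow, mul_inv_rev, inv_inv, inv_inv]

theorem commute_mul_pow_three : Commute ((u * s) ^ 3) s :=
  z_pow_three ▸ (commute_z s).pow_left 3

theorem z_pow_twelve : z ^ 12 = 1 := by
  rw [show 12 = 3 * 4 by rfl, pow_mul, z_pow_three, ← pow_mul]
  exact mul_pow_twelve_eq_one s_sq u_cube commute_mul_pow_three

def HasNormalForm (g : G7) : Prop := ∃ (i j : ℕ) (k : Fin 4), g = z ^ i * u ^ j * xs s u k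

theorem HasNormalForm.mul_s {g : G7} (hg : HasNormalForm g) : HasNormalForm (g * s) := by
  obtain ⟨i, j, k, rfl⟩ := hg
  obtain ⟨k', hk'⟩ := exists_xs_mul_s s_sq k
  exact ⟨i, j, k', by rw [mul_assoc, hk']⟩

theorem HasNormalForm.mul_u {g : G7} (hg : HasNormalForm g) : HasNormalForm (g * u) := by
  obtain ⟨i, j, k, rfl⟩ := hg
  obtain ⟨a, b, k', hk'⟩ := exists_xs_mul_u s_sq u_cube commute_mul_pow_three k
  refine ⟨i + 3 * a, j + b, k', ?_⟩
  rw [mul_assoc, hk', pow_mul, ← z_pow_three, ← pow_mul]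
  calc z ^ i * u ^ j * (z ^ (3 * a) * (u ^ b * xs s u k'))
      = z ^ i * (u ^ j * z ^ (3 * a)) * (u ^ b * xs s u k') := by group
    _ = z ^ i * (z ^ (3 * a) * u ^ j) * (u ^ b * xs s u k') := by
      rw [← ((commute_z (u ^ j)).pow_left (3 * a)).eq]
    _ = z ^ (i + 3 * a) * u ^ (j + b) * xs s u k' := by group

theorem HasNormalForm.mul_z {g : G7} (hg : HasNormalForm g) : HasNormalForm (g * z) := by
  obtain ⟨i, j, k, rfl⟩ := hg
  refine ⟨i + 1, j, k, ?_⟩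
  rw [(commute_z _).eq.symm]
  group

theorem HasNormalForm.mul_t {g : G7} (hg : HasNormalForm g) : HasNormalForm (g * t) := by
  have ht : t = s * z * u * u := by
    rw [z]
    simp only [mul_assoc, mul_mul_cancel_of_sq_eq_one s_sq, ← pow_three, u_cube, mul_one]
  rw [ht, ← mul_assoc, ← mul_assoc, ← mul_assoc]
  exact hg.mul_s.mul_z.mul_u.mul_u

theorem HasNormalForm.mul_of {g : G7} (hg : HasNormalForm g) (j : Fin 3) :
    HasNormalForm (g * PresentedGroup.of j) := by
  fin_cases j
  · exact hg.mul_s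
  · exact hg.mul_t
  · exact hg.mul_u

theorem HasNormalForm.mul_inv_of {g : G7} (hg : HasNormalForm g) (j : Fin 3) :
    HasNormalForm (g * (PresentedGroup.of j)⁻¹) := by
  fin_cases j
  · change HasNormalForm (g * s⁻¹)
    rw [inv_eq_of_mul_eq_one_right (by rw [← pow_two, s_sq] : s * s = 1)]
    exact hg.mul_s
  · change HasNormalForm (g * t⁻¹)
    rw [inv_eq_of_mul_eq_one_right (by rw [← pow_three, t_cube] : t * (t * t) = 1), ← mul_assoc]
    exact hg.mul_t.mul_t
  · change HasNormalForm (g * u⁻¹)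
    rw [inv_eq_of_mul_eq_one_right (by rw [← pow_three, u_cube] : u * (u * u) = 1), ← mul_assoc]
    exact hg.mul_u.mul_u

theorem hasNormalForm (g : G7) : HasNormalForm g := by
  have hg : g ∈ Subgroup.closure (Set.range PresentedGroup.of) := by
    rw [PresentedGroup.closure_range_of]; trivial
  induction hg using Subgroup.closure_induction_right with
  | one => exact ⟨0, 0, 0, by simp [xs]⟩
  | mul_right g _ y hy ih =>
    obtain ⟨j, rfl⟩ := hy
    exact ih.mul_of j
  | mul_inv_cancel g _ y hy ih =>
    obtain ⟨j, rfl⟩ := hy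
    exact ih.mul_inv_of j

theorem normalWord_surjective : Function.Surjective (normalWord z u s) := by
  intro g
  obtain ⟨i, j, k, rfl⟩ := hasNormalForm g
  refine ⟨(⟨i % 12, Nat.mod_lt _ (by norm_num)⟩, ⟨j % 3, Nat.mod_lt _ (by norm_num)⟩, k), ?_⟩
  simp only [normalWord, ← pow_eq_pow_mod _ z_pow_twelve, ← pow_eq_pow_mod _ u_cube]

theorem exists_mem_pow_smul_G6 (g : G7) : ∃ a < 3, g ∈ z ^ a • (G6 : Set G7) := by
  obtain ⟨i, j, k, rfl⟩ := hasNormalForm g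
  have hz3 : z ^ 3 ∈ G6 := z_pow_three ▸ pow_mem (mul_mem (Subgroup.subset_closure (by simp))
    (Subgroup.subset_closure (by simp))) 3
  have hu : u ∈ G6 := Subgroup.subset_closure (by simp)
  refine ⟨i % 3, Nat.mod_lt _ (by norm_num), (z ^ 3) ^ (i / 3) * u ^ j * xs s u k,
    mul_mem (mul_mem (pow_mem hz3 _) (pow_mem hu _)) (xs_mem_closure s u k), ?_⟩
  change z ^ (i % 3) * _ = _
  rw [← pow_mul, ← mul_assoc, ← mul_assoc, ← pow_add, Nat.mod_add_div]

theorem union_pow_smul_G6 :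
    (G6 : Set G7) ∪ z • (G6 : Set G7) ∪ z ^ 2 • (G6 : Set G7) = Set.univ := by
  refine Set.eq_univ_of_forall fun g => ?_
  obtain ⟨a, ha, hg⟩ := exists_mem_pow_smul_G6 g
  interval_cases a <;> simp_all

theorem lift_rels_eq_one {H : Type*} [Group H] {a b c : H} (ha : a ^ 2 = 1) (hb : b ^ 3 = 1)
    (hc : c ^ 3 = 1) (h₁ : a * b * c = b * c * a) (h₂ : a * b * c = c * a * b) :
    ∀ r ∈ rels, FreeGroup.lift ![a, b, c] r = 1 := by
  simp only [rels, Set.mem_insert_iff, Set.mem_singleton_iff]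
  rintro r (rfl | rfl | rfl | rfl | rfl)
  · simpa using ha
  · simpa using hb
  · simpa using hc
  · rw [map_mul, map_inv, mul_inv_eq_one]; simpa using h₁
  · rw [map_mul, map_inv, mul_inv_eq_one]; simpa using h₂

section Lift

variable {H : Type*} [Group H] {a b c : H} (ha : a ^ 2 = 1) (hb : b ^ 3 = 1) (hc : c ^ 3 = 1)
  (h₁ : a * b * c = b * c * a) (h₂ : a * b * c = c * a * b)

def lift : G7 →* H := PresentedGroup.toGroup (lift_rels_eq_one ha hb hc h₁ h₂)

theorem lift_s : lift ha hb hc h₁ h₂ s = a := PresentedGroup.toGroup.of _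
theorem lift_t : lift ha hb hc h₁ h₂ t = b := PresentedGroup.toGroup.of _
theorem lift_u : lift ha hb hc h₁ h₂ u = c := PresentedGroup.toGroup.of _

theorem lift_z : lift ha hb hc h₁ h₂ z = a * b * c := by
  rw [z, map_mul, map_mul, lift_s, lift_t, lift_u]

end Lift

def tExponent : G7 →* Multiplicative (ZMod 3) :=
  lift (a := 1) (b := .ofAdd 1) (c := 1) (by decide) (by decide) (by decide) (by decide) (by decide)

theorem disjoint_pow_smul_G6 {a b : ℕ} (hab : a % 3 ≠ b % 3) :
    Disjoint (z ^ a • (G6 : Set G7)) (z ^ b • (G6 : Set G7)) := by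
  have hG6 : G6 ≤ tExponent.ker := by
    rw [G6, Subgroup.closure_le]
    rintro x (rfl | rfl)
    exacts [lift_s .., lift_u ..]
  have hz (n : ℕ) : tExponent (z ^ n) = .ofAdd (n : ZMod 3) := by
    rw [map_pow, tExponent, lift_z, one_mul, mul_one, ← ofAdd_nsmul, nsmul_one]
  refine disjoint_smul_of_le_ker tExponent hG6 ?_
  rw [hz, hz, Ne, Multiplicative.ofAdd.apply_eq_iff_eq, ZMod.natCast_eq_natCast_iff']
  exact hab

-- `S`, `T`, `U` are reflections and `S * T * U = 2`, a primitive 12th root of unity in `𝔽₁₃`.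
def S : GL (Fin 2) (ZMod 13) := ⟨!![3, 1; 5, 10], !![3, 1; 5, 10], by decide, by decide⟩
def T : GL (Fin 2) (ZMod 13) := ⟨!![6, 5; 10, 11], !![8, 7; 1, 2], by decide, by decide⟩
def U : GL (Fin 2) (ZMod 13) := ⟨!![1, 0; 0, 3], !![1, 0; 0, 9], by decide, by decide⟩

def ρ : G7 →* GL (Fin 2) (ZMod 13) :=
  lift (a := S) (b := T) (c := U) (by decide) (by decide) (by decide) (by decide) (by decide)

theorem normalWord_STU_injective : Function.Injective (normalWord (S * T * U) U S) := by
  decide +kernel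

theorem normalWord_bijective : Function.Bijective (normalWord z u s) := by
  have hρ (p) : ρ (normalWord z u s p) = normalWord (S * T * U) U S p := by
    rw [map_normalWord, ρ, lift_z, lift_u, lift_s]
  refine ⟨fun p q hpq => normalWord_STU_injective ?_, normalWord_surjective⟩
  rw [← hρ, ← hρ, hpq]

theorem statement3 :
    ((G6 : Set G7) ∪ z • (G6 : Set G7) ∪ z ^ 2 • (G6 : Set G7) = Set.univ) ∧
    Disjoint (G6 : Set G7) (z • (G6 : Set G7)) ∧
    Disjoint (G6 : Set G7) (z ^ 2 • (G6 : Set G7)) ∧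
    Disjoint (z • (G6 : Set G7)) (z ^ 2 • (G6 : Set G7)) ∧
    Set.BijOn (fun p : G7 × G7 × G7 => p.1 * p.2.1 * p.2.2)
      (({1, z, z ^ 2, z ^ 3, z ^ 4, z ^ 5, z ^ 6, z ^ 7, z ^ 8, z ^ 9, z ^ 10, z ^ 11} : Set G7) ×ˢ (({1, u, u ^ 2} : Set G7) ×ˢ ({1, s, s * u, s * u * s} : Set G7)))
      (Set.univ : Set G7) := by
  refine ⟨union_pow_smul_G6, by simpa using disjoint_pow_smul_G6 (a := 0) (b := 1) (by decide),
    by simpa using disjoint_pow_smul_G6 (a := 0) (b := 2) (by decide),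
    by simpa using disjoint_pow_smul_G6 (a := 1) (b := 2) (by decide), ?_⟩
  let index := Prod.map (fun i : Fin 12 => z ^ (i : ℕ))
    (Prod.map (fun j : Fin 3 => u ^ (j : ℕ)) (xs s u))
  have hrange : Set.range index =
      ({1, z, z ^ 2, z ^ 3, z ^ 4, z ^ 5, z ^ 6, z ^ 7, z ^ 8, z ^ 9, z ^ 10, z ^ 11} : Set G7) ×ˢ
        (({1, u, u ^ 2} : Set G7) ×ˢ ({1, s, s * u, s * u * s} : Set G7)) := by
    simp only [index, Set.range_prodMap]
    congr 1
    · ext; simp [Fin.exists_fin_succ, eq_comm]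
    · congr 1
      · ext; simp [Fin.exists_fin_succ, eq_comm]
      · ext; simp [xs]; tauto
  have hinj : Function.Injective index :=
    Function.Injective.of_comp (f := fun p : G7 × G7 × G7 => p.1 * p.2.1 * p.2.2)
      normalWord_bijective.injective
  rw [← hrange, ← Set.image_univ]
  exact (Set.bijOn_comp_iff hinj.injOn).1 normalWord_bijective.bijOn_univ

end Tetra
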